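/- For all positive integers m, n, the function h(x) = cos x satisfies the Sturm–Liouville equation −σ(x)·d/dx(σ(x)·dh/dx) + 2n²·h(x) = 2·ρ(x)·h(x) for all real x, i.e. cos x is a solution of the associated periodic Sturm–Liouville problem with parameter l = n and eigenvalue λ = 2. -/

import Mathlib

open Real

/-- `σ(x) = √(m² + 4mn + n² − (m² − n²)cos 2x)`. -/
noncomputable def sigmaMN (m n : ℕ) (x : ℝ) : ℝ :=
  Real.sqrt ((m : ℝ) ^ 2 + 4 * m * n + n ^ 2 - ((m : ℝ) ^ 2 - n ^ 2) * Real.cos (2 * x))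

/-- `ρ(x) = (m+n)(m+n − (m−n)cos 2x)`. -/
noncomputable def rhoMN (m n : ℕ) (x : ℝ) : ℝ :=
  ((m : ℝ) + n) * ((m : ℝ) + n - ((m : ℝ) - n) * Real.cos (2 * x))

/-!
Writing `σ = √g`, the square roots cancel from the operator: `σ (σ h')' = ½ g' h' + g h''`.
For `h = cos` and `g = m² + 4mn + n² − (m² − n²) cos 2x` this is a trigonometric polynomial,
and the equation becomes an identity after `sin 2x = 2 sin x cos x`, `cos 2x = 2 cos² x − 1`.
-/

theorem sqrt_mul_deriv_sqrt_mul {g f : ℝ → ℝ} {g' f' x : ℝ} (hg : HasDerivAt g g' x)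
    (hgx : 0 < g x) (hf : HasDerivAt f f' x) :
    √(g x) * deriv (fun t => √(g t) * f t) x = g' / 2 * f x + g x * f' := by
  have hsqrt : HasDerivAt (fun t => √(g t)) (g' / (2 * √(g x))) x := hg.sqrt hgx.ne'
  have hsqrt_ne : √(g x) ≠ 0 := Real.sqrt_ne_zero'.mpr hgx
  have hprod : HasDerivAt (fun t => √(g t) * f t) (g' / (2 * √(g x)) * f x + √(g x) * f') x :=
    hsqrt.mul hf
  rw [hprod.deriv]
  field_simp
  rw [Real.sq_sqrt hgx.le]
  ring

theorem hasDerivAt_const_sub_mul_cos_two_mul (a b x : ℝ) :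
    HasDerivAt (fun t => a - b * Real.cos (2 * t)) (2 * b * Real.sin (2 * x)) x := by
  refine (((hasDerivAt_id x).const_mul 2).cos.const_mul b).const_sub a |>.congr_deriv ?_
  simp only [id]
  ring

theorem sq_add_four_mul_add_sq_sub_mul_pos {m n c : ℝ} (hm : 0 < m) (hn : 0 < n)
    (hc : |c| ≤ 1) : 0 < m ^ 2 + 4 * m * n + n ^ 2 - (m ^ 2 - n ^ 2) * c := by
  obtain ⟨hc₁, hc₂⟩ := abs_le.mp hc
  nlinarith [mul_pos hm hn, mul_nonneg (sq_nonneg m) (sub_nonneg.mpr hc₂),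
    mul_nonneg (sq_nonneg n) (neg_le_iff_add_nonneg.mp hc₁)]

/-- `h(x) = cos x` solves the associated periodic Sturm–Liouville problem
`−σ(x)·d/dx(σ(x)·dh/dx) + 2l²·h = λ·ρ(x)·h` with parameter `l = n` and eigenvalue `λ = 2`. -/
theorem cos_solves_sturm_liouville (m n : ℕ) (hm : 0 < m) (hn : 0 < n) (x : ℝ) :
    -(sigmaMN m n x * deriv (fun t : ℝ => sigmaMN m n t * deriv Real.cos t) x) +
      2 * (n : ℝ) ^ 2 * Real.cos x = 2 * rhoMN m n x * Real.cos x := by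
  have hpos := sq_add_four_mul_add_sq_sub_mul_pos (Nat.cast_pos.mpr hm) (Nat.cast_pos.mpr hn)
    (abs_cos_le_one (2 * x))
  have hoperator := sqrt_mul_deriv_sqrt_mul (f := fun t => -Real.sin t)
    (hasDerivAt_const_sub_mul_cos_two_mul _ _ x) hpos (hasDerivAt_sin x).neg
  simp only [Real.deriv_cos]
  unfold sigmaMN
  rw [hoperator, rhoMN, Real.sin_two_mul, Real.cos_two_mul]
  linear_combination (2 * ((m : ℝ) ^ 2 - n ^ 2) * Real.cos x) * Real.sin_sq_add_cos_sq x
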